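/- In G = ℤ² ⋊ ℤ/2ℤ (swap action) with a = ((1,0),0), t = ((0,0),1), the word length of the element ((x,y),0) with y ≠ 0 is |x| + |y| + 2, and the word length of ((x,0),0) is |x|. -/

import Mathlib

/-- The coordinate-swapping automorphism of ℤ². -/
def swapAut : MulAut (Multiplicative (ℤ × ℤ)) :=
  AddEquiv.toMultiplicative (AddEquiv.prodComm : (ℤ × ℤ) ≃+ (ℤ × ℤ))

lemma swapAut_sq : swapAut ^ 2 = 1 := by
  refine MulEquiv.ext fun z => ?_
  show swapAut (swapAut z) = z
  cases z
  rfl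

/-- The action of ℤ/2ℤ on ℤ² by swapping the two coordinates. -/
def swapAction : Multiplicative (ZMod 2) →* MulAut (Multiplicative (ℤ × ℤ)) where
  toFun ε := swapAut ^ (Multiplicative.toAdd ε).val
  map_one' := rfl
  map_mul' x y := by
    show swapAut ^ _ = swapAut ^ _ * swapAut ^ _
    rw [← pow_add]
    have key : ∀ m n : ℕ, m % 2 = n % 2 → swapAut ^ m = swapAut ^ n := by
      intro m n h
      rw [← Nat.div_add_mod m 2, ← Nat.div_add_mod n 2, h, pow_add, pow_add,
        pow_mul, pow_mul, swapAut_sq]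
      simp
    apply key
    have := ZMod.val_add (Multiplicative.toAdd x) (Multiplicative.toAdd y)
    simp only [toAdd_mul] at *
    omega

/-- The group G = ℤ² ⋊ ℤ/2ℤ with the swap action. -/
abbrev GG := SemidirectProduct (Multiplicative (ℤ × ℤ)) (Multiplicative (ZMod 2)) swapAction

/-- The generator a = ((1,0), 0). -/
def ga : GG := SemidirectProduct.inl (Multiplicative.ofAdd ((1, 0) : ℤ × ℤ))

/-- The generator t = ((0,0), 1). -/
def gt : GG := SemidirectProduct.inr (Multiplicative.ofAdd (1 : ZMod 2))

/-- The element ((x,y), ε) of G. -/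
def el (x y : ℤ) (ε : ZMod 2) : GG :=
  ⟨Multiplicative.ofAdd (x, y), Multiplicative.ofAdd ε⟩

/-- The generating set A = {a, a⁻¹, t, t⁻¹}. -/
def GenSet : Set GG := {ga, ga⁻¹, gt, gt⁻¹}

/-- `w` is a word over the alphabet A. -/
def IsWord (w : List GG) : Prop := ∀ x ∈ w, x ∈ GenSet

/-- `w` is a word over A representing the group element `g` (via its product). -/
def Represents (w : List GG) (g : GG) : Prop := IsWord w ∧ w.prod = g

/-- The word length of `g`: minimal length of a word over A representing `g`. -/
noncomputable def wordLength (g : GG) : ℕ :=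
  sInf {n | ∃ w : List GG, Represents w g ∧ w.length = n}

/-- A word over A is geodesic if no strictly shorter word over A represents
the same element. -/
def IsGeodesic (w : List GG) : Prop :=
  IsWord w ∧ ∀ v : List GG, IsWord v → v.prod = w.prod → w.length ≤ v.length

open Classical in
/-- The number of t-letters of a word (occurrences of t and t⁻¹). -/
noncomputable def tCount (w : List GG) : ℕ :=
  w.countP (fun x => decide (x = gt ∨ x = gt⁻¹))

/-- The word aˣ over A: x letters `a` if x ≥ 0, |x| letters `a⁻¹` if x < 0. -/
def apow (x : ℤ) : List GG :=
  if 0 ≤ x then List.replicate x.toNat ga else List.replicate (-x).toNat ga⁻¹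

/-- The word metric on G with respect to A. -/
noncomputable def dA (g h : GG) : ℕ := wordLength (g⁻¹ * h)

/-- The point of G reached at time i along the word w (the endpoint if i
exceeds the length of w). -/
def pt (w : List GG) (i : ℕ) : GG := (w.take i).prod

/-- Words u and w synchronously k-fellow travel. -/
def FellowTravels (k : ℕ) (u w : List GG) : Prop :=
  ∀ i : ℕ, dA (pt u i) (pt w i) ≤ k

/-!
The function `N((x, y), ε) = |x| + |y| + c` with `c = 1` off the subgroup ℤ², and on ℤ²
`c = 0` if `y = 0` and `c = 2` otherwise, satisfies `N 1 = 0` and grows by at most one under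
left multiplication by a generator: `a^{±1}` moves `x` by one, while `t` swaps the coordinates
and changes the coset, which only changes `c`. So `N` bounds the word length from below, and
the words `aˣ` and `aˣ t aʸ t` have length exactly `N`.
-/

open Multiplicative

lemma exists_el (g : GG) : ∃ x y ε, g = el x y ε :=
  ⟨(toAdd g.left).1, (toAdd g.left).2, toAdd g.right, rfl⟩

lemma ga_eq_el : ga = el 1 0 0 := rfl

lemma gt_eq_el : gt = el 0 0 1 := rfl

lemma el_zero_mul_el (x y x' y' : ℤ) (ε : ZMod 2) :
    el x y 0 * el x' y' ε = el (x + x') (y + y') ε := by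
  refine SemidirectProduct.ext ?_ ?_
  · show ofAdd (x, y) * (swapAut ^ (0 : ZMod 2).val) (ofAdd (x', y')) = ofAdd (x + x', y + y')
    rw [ZMod.val_zero, pow_zero]
    rfl
  · exact congrArg ofAdd (zero_add ε)

lemma el_one_mul_el (x y x' y' : ℤ) (ε : ZMod 2) :
    el x y 1 * el x' y' ε = el (x + y') (y + x') (1 + ε) := by
  refine SemidirectProduct.ext ?_ ?_
  · show ofAdd (x, y) * (swapAut ^ (1 : ZMod 2).val) (ofAdd (x', y')) = ofAdd (x + y', y + x')
    rw [ZMod.val_one, pow_one]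
    rfl
  · rfl

lemma ga_inv_eq_el : ga⁻¹ = el (-1) 0 0 :=
  (eq_inv_of_mul_eq_one_left (by rw [ga_eq_el, el_zero_mul_el]; rfl)).symm

lemma gt_inv_eq_gt : gt⁻¹ = gt :=
  (eq_inv_of_mul_eq_one_left (by rw [gt_eq_el, el_one_mul_el]; rfl)).symm

section WordLength

variable {w : List GG} {g : GG}

lemma wordLength_le_length (hw : Represents w g) : wordLength g ≤ w.length :=
  Nat.sInf_le ⟨w, hw, rfl⟩

lemma exists_represents_length_eq_wordLength (hw : Represents w g) :
    ∃ v, Represents v g ∧ v.length = wordLength g :=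
  Nat.sInf_mem (s := {n | ∃ v, Represents v g ∧ v.length = n}) ⟨w.length, w, hw, rfl⟩

lemma le_length_of_represents {N : GG → ℕ} (h_one : N 1 = 0)
    (h_mul : ∀ s ∈ GenSet, ∀ g, N (s * g) ≤ N g + 1) (hw : Represents w g) :
    N g ≤ w.length := by
  obtain ⟨hword, rfl⟩ := hw
  induction w with
  | nil => simp [h_one]
  | cons s w ih =>
    have hs : s ∈ GenSet := hword s List.mem_cons_self
    have hw' : IsWord w := fun x hx => hword x (List.mem_cons_of_mem s hx)
    rw [List.prod_cons, List.length_cons]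
    exact (h_mul s hs w.prod).trans (Nat.add_le_add_right (ih hw') 1)

lemma wordLength_eq_of_represents {N : GG → ℕ} (h_one : N 1 = 0)
    (h_mul : ∀ s ∈ GenSet, ∀ g, N (s * g) ≤ N g + 1) (hw : Represents w g)
    (hlen : w.length = N g) : wordLength g = N g := by
  refine le_antisymm (hlen ▸ wordLength_le_length hw) ?_
  obtain ⟨v, hv, hvlen⟩ := exists_represents_length_eq_wordLength hw
  exact hvlen ▸ le_length_of_represents h_one h_mul hv

end WordLength

def swapCost (y : ℤ) (ε : ZMod 2) : ℕ := if ε = 0 then (if y = 0 then 0 else 2) else 1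

def lengthFormula (g : GG) : ℕ :=
  (toAdd g.left).1.natAbs + (toAdd g.left).2.natAbs + swapCost (toAdd g.left).2 (toAdd g.right)

lemma lengthFormula_el (x y : ℤ) (ε : ZMod 2) :
    lengthFormula (el x y ε) = x.natAbs + y.natAbs + swapCost y ε := rfl

lemma lengthFormula_one : lengthFormula 1 = 0 := rfl

lemma lengthFormula_ga_mul (x y : ℤ) (ε : ZMod 2) :
    lengthFormula (ga * el x y ε) ≤ lengthFormula (el x y ε) + 1 := by
  rw [ga_eq_el, el_zero_mul_el, lengthFormula_el, lengthFormula_el, zero_add]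
  omega

lemma lengthFormula_ga_inv_mul (x y : ℤ) (ε : ZMod 2) :
    lengthFormula (ga⁻¹ * el x y ε) ≤ lengthFormula (el x y ε) + 1 := by
  rw [ga_inv_eq_el, el_zero_mul_el, lengthFormula_el, lengthFormula_el, zero_add]
  omega

lemma lengthFormula_gt_mul (x y : ℤ) (ε : ZMod 2) :
    lengthFormula (gt * el x y ε) ≤ lengthFormula (el x y ε) + 1 := by
  rw [gt_eq_el, el_one_mul_el, lengthFormula_el, lengthFormula_el, zero_add, zero_add]
  have h : ε = 0 ∨ ε = 1 := by revert ε; decide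
  have h_two : (1 + 1 : ZMod 2) = 0 := rfl
  rcases h with rfl | rfl <;>
    simp only [swapCost, add_zero, h_two, one_ne_zero, if_true, if_false] <;> split_ifs <;> omega

lemma lengthFormula_mul_le {s : GG} (hs : s ∈ GenSet) (g : GG) :
    lengthFormula (s * g) ≤ lengthFormula g + 1 := by
  obtain ⟨x, y, ε, rfl⟩ := exists_el g
  rcases hs with rfl | rfl | rfl | rfl
  · exact lengthFormula_ga_mul x y ε
  · exact lengthFormula_ga_inv_mul x y ε
  · exact lengthFormula_gt_mul x y ε
  · exact gt_inv_eq_gt ▸ lengthFormula_gt_mul x y ε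

lemma wordLength_eq_lengthFormula {w : List GG} {g : GG} (hw : Represents w g)
    (hlen : w.length = lengthFormula g) : wordLength g = lengthFormula g :=
  wordLength_eq_of_represents lengthFormula_one (fun _ hs => lengthFormula_mul_le hs) hw hlen

lemma ga_pow_eq_el (n : ℕ) : ga ^ n = el n 0 0 := by
  induction n with
  | zero => rfl
  | succ n ih => rw [pow_succ, ih, ga_eq_el, el_zero_mul_el, Nat.cast_succ, add_zero]

lemma ga_inv_pow_eq_el (n : ℕ) : ga⁻¹ ^ n = el (-n) 0 0 := by
  rw [inv_pow, ga_pow_eq_el]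
  exact (eq_inv_of_mul_eq_one_left (by rw [el_zero_mul_el, neg_add_cancel, add_zero]; rfl)).symm

lemma isWord_apow (x : ℤ) : IsWord (apow x) := by
  intro s hs
  unfold apow at hs
  split_ifs at hs <;> rw [List.eq_of_mem_replicate hs] <;> simp [GenSet]

lemma represents_apow (x : ℤ) : Represents (apow x) (el x 0 0) := by
  refine ⟨isWord_apow x, ?_⟩
  unfold apow
  split_ifs with hx
  · rw [List.prod_replicate, ga_pow_eq_el, Int.toNat_of_nonneg hx]
  · rw [List.prod_replicate, ga_inv_pow_eq_el, Int.toNat_of_nonneg (by omega), neg_neg]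

lemma length_apow (x : ℤ) : (apow x).length = x.natAbs := by
  unfold apow
  split_ifs <;> rw [List.length_replicate] <;> omega

lemma represents_apow_gt_apow_gt (x y : ℤ) :
    Represents (apow x ++ gt :: apow y ++ [gt]) (el x y 0) := by
  obtain ⟨hx, hxprod⟩ := represents_apow x
  obtain ⟨hy, hyprod⟩ := represents_apow y
  constructor
  · intro s hs
    simp only [List.mem_append, List.mem_cons, List.not_mem_nil, or_false] at hs
    rcases hs with ((h | rfl | h) | rfl) <;> first | exact hx s h | exact hy s h | simp [GenSet]
  · simp only [List.prod_append, List.prod_cons, List.prod_nil, mul_one, hxprod, hyprod, gt_eq_el,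
      el_zero_mul_el, el_one_mul_el, add_zero, zero_add]
    rfl

/-- The word length of ((x,y),0) is |x| + |y| + 2 when y ≠ 0, and the word
length of ((x,0),0) is |x|. -/
theorem wordLength_bottom (x y : ℤ) :
    (y ≠ 0 → wordLength (el x y 0) = x.natAbs + y.natAbs + 2) ∧
    wordLength (el x 0 0) = x.natAbs := by
  refine ⟨fun hy => ?_, ?_⟩
  · have hformula : lengthFormula (el x y 0) = x.natAbs + y.natAbs + 2 := by
      simp [lengthFormula_el, swapCost, hy]
    have hlen : (apow x ++ gt :: apow y ++ [gt]).length = lengthFormula (el x y 0) := by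
      simp only [List.length_append, List.length_cons, List.length_nil, length_apow, hformula]
      omega
    rw [wordLength_eq_lengthFormula (represents_apow_gt_apow_gt x y) hlen, hformula]
  · have hformula : lengthFormula (el x 0 0) = x.natAbs := by
      simp [lengthFormula_el, swapCost]
    rw [wordLength_eq_lengthFormula (represents_apow x) (by rw [length_apow, hformula]), hformula]
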